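/- arXiv:1904.03098 — 2 statements merged into one kernel-verified Lean document; each statement's English description precedes it below -/
import Mathlib

section
/- Let G be an n×n idempotent real matrix, σ_s, σ_a > 0, σ_t = σ_s + σ_a, and let q ∈ ℝⁿ. Then the solution of the linear ODE u'(t) = (σ_s G − σ_t I)u(t) + q with u(0) = u₀ is given by u(t) = e^{−σ_t t}(I + (e^{σ_s t} − 1)G)u₀ + ( (1−e^{−σ_t t})/σ_t · (I − G) + (1−e^{−σ_a t})/σ_a · G ) q. -/
/-!
Since `G` is idempotent, `ℝⁿ` splits into the ranges of `1 - G` and `G`, on which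
`A = σs G - σt I` acts as `-σt` and as `σs - σt = -σa`. On each piece the equation is the scalar
relaxation `w' = -a w + r`, solved by `e^{-a t} w₀ + (1 - e^{-a t}) / a • r`; adding the two
pieces gives the stated formula, and uniqueness for the Lipschitz affine field `x ↦ A x + q`
identifies it with `u`.
-/

open Matrix

section Relaxation

variable {E : Type*} [NormedAddCommGroup E] [NormedSpace ℝ E]

noncomputable def expRelaxation (a : ℝ) (w₀ r : E) (t : ℝ) : E :=
  Real.exp (-a * t) • w₀ + ((1 - Real.exp (-a * t)) / a) • r

@[simp]
theorem expRelaxation_zero (a : ℝ) (w₀ r : E) : expRelaxation a w₀ r 0 = w₀ := by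
  simp [expRelaxation]

theorem hasDerivAt_expRelaxation {a : ℝ} (ha : a ≠ 0) (w₀ r : E) (t : ℝ) :
    HasDerivAt (expRelaxation a w₀ r) (-a • expRelaxation a w₀ r t + r) t := by
  have hexp : HasDerivAt (fun s => Real.exp (-a * s)) (-a * Real.exp (-a * t)) t := by
    simpa [mul_comm] using ((hasDerivAt_id t).const_mul (-a)).exp
  refine ((hexp.smul_const w₀).add (((hexp.const_sub 1).div_const a).smul_const r)).congr_deriv ?_
  simp only [expRelaxation, smul_add, smul_smul]
  match_scalars
  · ring
  · field_simp
    ring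

end Relaxation

section Idempotent

variable {K R : Type*} [CommRing K] [Ring R] [Algebra K R] {G : R}

theorem IsIdempotentElem.smul_sub_smul_one_mul (hG : IsIdempotentElem G) (c d : K) :
    (c • G - d • 1) * G = (c - d) • G := by
  rw [sub_mul, smul_mul_assoc, hG.eq, smul_mul_assoc, one_mul, sub_smul]

theorem IsIdempotentElem.smul_sub_smul_one_mul_one_sub (hG : IsIdempotentElem G) (c d : K) :
    (c • G - d • 1) * (1 - G) = -d • (1 - G) := by
  rw [mul_sub, mul_one, hG.smul_sub_smul_one_mul, sub_smul, neg_smul, smul_sub]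
  abel

end Idempotent

section AffineLinearODE

variable {ι κ : Type*} [Fintype ι] [Fintype κ]

theorem Matrix.one_sub_mulVec_add_mulVec {α : Type*} [Ring α] [DecidableEq ι]
    (G : Matrix ι ι α) (x : ι → α) : (1 - G) *ᵥ x + G *ᵥ x = x := by
  rw [sub_mulVec, one_mulVec, sub_add_cancel]

theorem Matrix.exists_lipschitzWith_mulVec_add_const (A : Matrix κ ι ℝ) (q : κ → ℝ) :
    ∃ K, LipschitzWith K fun x : ι → ℝ => A *ᵥ x + q :=
  ⟨_, (LinearMap.toContinuousLinearMap A.mulVecLin).lipschitz.add (LipschitzWith.const q)⟩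

theorem HasDerivAt.matrix_mulVec (P : Matrix κ ι ℝ) {w : ℝ → ι → ℝ} {w' : ι → ℝ} {t : ℝ}
    (h : HasDerivAt w w' t) : HasDerivAt (fun s => P *ᵥ w s) (P *ᵥ w') t :=
  (LinearMap.toContinuousLinearMap P.mulVecLin).hasFDerivAt.comp_hasDerivAt t h

theorem Matrix.eq_of_hasDerivAt_mulVec_add_const {A : Matrix ι ι ℝ} {q : ι → ℝ}
    {f g : ℝ → ι → ℝ} {t₀ : ℝ} (hf : ∀ t, HasDerivAt f (A *ᵥ f t + q) t)
    (hg : ∀ t, HasDerivAt g (A *ᵥ g t + q) t) (h : f t₀ = g t₀) : f = g := by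
  obtain ⟨K, hK⟩ := A.exists_lipschitzWith_mulVec_add_const q
  exact ODE_solution_unique_univ (v := fun _ x => A *ᵥ x + q) (s := fun _ => Set.univ)
    (fun _ => hK.lipschitzOnWith) (fun t => ⟨hf t, trivial⟩) (fun t => ⟨hg t, trivial⟩) h

theorem Matrix.hasDerivAt_mulVec_expRelaxation {A : Matrix κ κ ℝ} {P : Matrix κ ι ℝ} {a : ℝ}
    (ha : a ≠ 0) (hAP : A * P = -a • P) (w₀ r : ι → ℝ) (t : ℝ) :
    HasDerivAt (fun s => P *ᵥ expRelaxation a w₀ r s)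
      (A *ᵥ P *ᵥ expRelaxation a w₀ r t + P *ᵥ r) t := by
  refine ((hasDerivAt_expRelaxation ha w₀ r t).matrix_mulVec P).congr_deriv ?_
  rw [mulVec_mulVec, hAP, mulVec_add, smul_mulVec, mulVec_smul]

end AffineLinearODE

theorem source_ode_solution (n : ℕ) (G : Matrix (Fin n) (Fin n) ℝ)
    (hG : G * G = G) (σs σa σt : ℝ) (hσs : 0 < σs) (hσa : 0 < σa) (hσt : σt = σs + σa)
    (q u₀ : Fin n → ℝ) (u : ℝ → Fin n → ℝ)
    (hode : ∀ t : ℝ, HasDerivAt u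
      ((σs • G - σt • (1 : Matrix (Fin n) (Fin n) ℝ)).mulVec (u t) + q) t)
    (hinit : u 0 = u₀) :
    ∀ t : ℝ, u t =
      Real.exp (-σt * t) •
        (((1 : Matrix (Fin n) (Fin n) ℝ) + (Real.exp (σs * t) - 1) • G).mulVec u₀) +
      (((1 - Real.exp (-σt * t)) / σt) • ((1 : Matrix (Fin n) (Fin n) ℝ) - G) +
        ((1 - Real.exp (-σa * t)) / σa) • G).mulVec q := by
  set A := σs • G - σt • (1 : Matrix (Fin n) (Fin n) ℝ)
  have hσt₀ : σt ≠ 0 := by rw [hσt]; positivity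
  have hGi : IsIdempotentElem G := hG
  have hAG : A * G = -σa • G := by
    rw [hGi.smul_sub_smul_one_mul, hσt]; congr 1; ring
  have hAG' : A * (1 - G) = -σt • (1 - G) := hGi.smul_sub_smul_one_mul_one_sub σs σt
  set v : ℝ → Fin n → ℝ := fun t =>
    (1 - G) *ᵥ expRelaxation σt u₀ q t + G *ᵥ expRelaxation σa u₀ q t
  have hv : ∀ t, HasDerivAt v (A *ᵥ v t + q) t := fun t => by
    refine ((hasDerivAt_mulVec_expRelaxation hσt₀ hAG' u₀ q t).add
      (hasDerivAt_mulVec_expRelaxation hσa.ne' hAG u₀ q t)).congr_deriv ?_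
    rw [add_add_add_comm, one_sub_mulVec_add_mulVec, ← mulVec_add]
  have hu : u = v := A.eq_of_hasDerivAt_mulVec_add_const hode hv (t₀ := 0) (by
    simp [v, hinit, one_sub_mulVec_add_mulVec])
  intro t
  have hexp : Real.exp (-σa * t) = Real.exp (-σt * t) * Real.exp (σs * t) := by
    rw [← Real.exp_add, hσt]; ring_nf
  simp only [hu, v, expRelaxation, add_mulVec, sub_mulVec, one_mulVec, smul_mulVec, mulVec_add,
    mulVec_smul, hexp]
  match_scalars <;> ring
end

section
/- Let G be an n×n idempotent matrix, σ_s, σ_a > 0, σ_t = σ_s + σ_a, and q ∈ ℝⁿ with Gq = q. Then the solution of u' = (σ_s G − σ_t I)u + q with u(0) = u₀ is u(t) = e^{−σ_a t}(e^{−σ_s t}u₀ + (1−e^{−σ_s t})Gu₀) + ((1−e^{−σ_a t})/σ_a) q. -/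
/-!
The image and the kernel of the projection `G` are invariant under the generator
`σs • G - σt • 1`, which acts on them as `-σa` and `-σt` respectively. So `G *ᵥ u` solves the
scalar affine equation `a' = -σa a + q` and `(1 - G) *ᵥ u` the homogeneous `b' = -σt b`;
both are solved by an integrating factor, and `u = b + a`.
-/

open Real Matrix

section ScalarLinearODE

variable {E : Type*} [NormedAddCommGroup E] [NormedSpace ℝ E]

theorem eq_exp_smul_of_hasDerivAt {f : ℝ → E} {c : ℝ} (hf : ∀ t, HasDerivAt f (c • f t) t)
    (t : ℝ) : f t = exp (c * t) • f 0 := by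
  have hconst : ∀ s, HasDerivAt (fun s => exp (-c * s) • f s) 0 s := by
    intro s
    have hexp : HasDerivAt (fun s => exp (-c * s)) (exp (-c * s) * -c) s := by
      simpa [mul_comm] using ((hasDerivAt_id s).const_mul (-c)).exp
    refine (hexp.smul (hf s)).congr_deriv ?_
    rw [smul_smul, ← add_smul, mul_neg, add_neg_cancel, zero_smul]
  have h := is_const_of_deriv_eq_zero (fun s => (hconst s).differentiableAt)
    (fun s => (hconst s).deriv) t 0
  simp only [mul_zero, exp_zero, one_smul] at h
  rw [← h, smul_smul, ← exp_add, neg_mul, add_neg_cancel, exp_zero, one_smul]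

theorem eq_exp_smul_add_of_hasDerivAt {f : ℝ → E} {c : ℝ} {w : E} (hc : c ≠ 0)
    (hf : ∀ t, HasDerivAt f (c • f t + w) t) (t : ℝ) :
    f t = exp (c * t) • (f 0 + c⁻¹ • w) - c⁻¹ • w := by
  have hshift : ∀ t, HasDerivAt (fun s => f s + c⁻¹ • w) (c • (f t + c⁻¹ • w)) t := by
    intro t
    convert (hf t).add_const (c⁻¹ • w) using 1
    rw [smul_add, smul_smul, mul_inv_cancel₀ hc, one_smul]
  rw [← eq_exp_smul_of_hasDerivAt hshift t, add_sub_cancel_right]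

end ScalarLinearODE

theorem HasDerivAt.matrix_mulVec_s3 {m n : Type*} [Fintype m] [Fintype n] {u : ℝ → n → ℝ}
    {u' : n → ℝ} {t : ℝ} (M : Matrix m n ℝ) (hu : HasDerivAt u u' t) :
    HasDerivAt (fun s => M *ᵥ u s) (M *ᵥ u') t :=
  (mulVecLin M).toContinuousLinearMap.hasFDerivAt.comp_hasDerivAt t hu

namespace IsIdempotentElem

variable {R A : Type*} [CommRing R] [Ring A] [Algebra R A] {p : A}

theorem mul_smul_sub_smul_one (hp : IsIdempotentElem p) (a b : R) :
    p * (a • p - b • 1) = (a - b) • p := by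
  rw [mul_sub, mul_smul_comm, mul_smul_comm, hp.eq, mul_one, sub_smul]

theorem one_sub_mul_smul_sub_smul_one (hp : IsIdempotentElem p) (a b : R) :
    (1 - p) * (a • p - b • 1) = (-b) • (1 - p) := by
  rw [sub_mul, one_mul, hp.mul_smul_sub_smul_one]
  module

end IsIdempotentElem

theorem source_ode_solution_isotropic_general (n : ℕ) (G : Matrix (Fin n) (Fin n) ℝ)
    (hG : G * G = G) (σs σa σt : ℝ) (hσa : 0 < σa) (hσt : σt = σs + σa)
    (q u₀ : Fin n → ℝ) (hq : G.mulVec q = q) (u : ℝ → Fin n → ℝ)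
    (hode : ∀ t : ℝ, HasDerivAt u
      ((σs • G - σt • (1 : Matrix (Fin n) (Fin n) ℝ)).mulVec (u t) + q) t)
    (hinit : u 0 = u₀) :
    ∀ t : ℝ, u t =
      Real.exp (-σa * t) •
        (Real.exp (-σs * t) • u₀ + (1 - Real.exp (-σs * t)) • G.mulVec u₀) +
      ((1 - Real.exp (-σa * t)) / σa) • q := by
  intro t
  have hGu : ∀ s, HasDerivAt (fun s => G *ᵥ u s) ((-σa) • (G *ᵥ u s) + q) s := fun s =>
    ((hode s).matrix_mulVec_s3 G).congr_deriv <| by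
      rw [mulVec_add, mulVec_mulVec, hq,
        IsIdempotentElem.mul_smul_sub_smul_one hG, smul_mulVec, hσt, sub_add_cancel_left]
  have hKu : ∀ s, HasDerivAt (fun s => (1 - G) *ᵥ u s) ((-σt) • ((1 - G) *ᵥ u s)) s := fun s =>
    ((hode s).matrix_mulVec_s3 (1 - G)).congr_deriv <| by
      rw [mulVec_add, mulVec_mulVec,
        IsIdempotentElem.one_sub_mul_smul_sub_smul_one hG, smul_mulVec]
      simp only [sub_mulVec, one_mulVec, hq, sub_self, add_zero]
  have hsplit : u t = (1 - G) *ᵥ u t + G *ᵥ u t := by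
    rw [sub_mulVec, one_mulVec, sub_add_cancel]
  have hexp : exp (-σt * t) = exp (-σa * t) * exp (-σs * t) := by
    rw [← exp_add, hσt]
    ring_nf
  rw [hsplit, eq_exp_smul_of_hasDerivAt hKu,
    eq_exp_smul_add_of_hasDerivAt (neg_ne_zero.2 hσa.ne') hGu, hinit, sub_mulVec, one_mulVec, hexp]
  match_scalars <;> field_simp <;> ring

theorem source_ode_solution_isotropic (n : ℕ) (G : Matrix (Fin n) (Fin n) ℝ)
    (hG : G * G = G) (σs σa σt : ℝ) (hσs : 0 < σs) (hσa : 0 < σa) (hσt : σt = σs + σa)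
    (q u₀ : Fin n → ℝ) (hq : G.mulVec q = q) (u : ℝ → Fin n → ℝ)
    (hode : ∀ t : ℝ, HasDerivAt u
      ((σs • G - σt • (1 : Matrix (Fin n) (Fin n) ℝ)).mulVec (u t) + q) t)
    (hinit : u 0 = u₀) :
    ∀ t : ℝ, u t =
      Real.exp (-σa * t) •
        (Real.exp (-σs * t) • u₀ + (1 - Real.exp (-σs * t)) • G.mulVec u₀) +
      ((1 - Real.exp (-σa * t)) / σa) • q :=
  source_ode_solution_isotropic_general n G hG σs σa σt hσa hσt q u₀ hq u hode hinit
end
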